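/- Let T : B₂ → L²([-π,π]×ℤ) be the PINEM forward operator defined by (Tρ)(θ,l) = ⟨e_l, U_θ ρ U_θ* e_l⟩ with U_θ e_l = ∑_{k∈ℤ} e^{i(k-l)θ} J_{k-l}(2|g|) e_k. Then T restricted to the set D of density operators does not have a uniformly continuous inverse: there exists ε > 0 such that for all δ > 0 there are density operators ρ, σ ∈ D with ‖Tρ - Tσ‖_{L²} < δ and ‖ρ - σ‖_{HS} > ε. In particular one may take ε < 1/√2 and, for suitable k with √2 π sup_{s∈[0,4|g|]} |J_k(s)| < δ, the operators ρ = (1/2)(e₀⊗e₀ + e_k⊗e_k) and σ = (1/2)(e₀+e_k)⊗(e₀+e_k)* satisfy ‖ρ-σ‖_{HS} = 1/√2 and ‖Tρ - Tσ‖ < δ. -/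

import Mathlib

open Real Filter ComplexConjugate

noncomputable section

/-- The PINEM forward operator on Hilbert–Schmidt operators on `ℓ²(ℤ)` (represented by
their matrix kernels): `(Tρ)(θ,l) = ⟨e_l, U_θ ρ U_θ* e_l⟩` with
`U_θ e_l = ∑_k e^{i(k-l)θ} J_{k-l}(2|g|) e_k`, i.e.
`(Tρ)(θ,l) = ∑_{j,k} e^{i(l-j)θ} J_{l-j}(2|g|) ρ_{jk} e^{i(k-l)θ} J_{l-k}(2|g|)`. -/
def Tpinem (J : ℤ → ℝ → ℝ) (g : ℝ) (ρ : ℤ → ℤ → ℂ) (θ : ℝ) (l : ℤ) : ℂ :=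
  ∑' j : ℤ, ∑' k : ℤ,
    Complex.exp (Complex.I * ((l : ℂ) - j) * θ) * ((J (l - j) (2 * |g|) : ℝ) : ℂ) *
      ρ j k * Complex.exp (Complex.I * ((k : ℂ) - l) * θ) * ((J (l - k) (2 * |g|) : ℝ) : ℂ)

/-- A density operator on `ℓ²(ℤ)`: Hermitian, positive semi-definite (nonnegative quadratic
form on finitely supported vectors) and of trace one. -/
def IsDensity (ρ : ℤ → ℤ → ℂ) : Prop :=
  (∀ j k : ℤ, ρ j k = conj (ρ k j)) ∧
  (∀ x : ℤ →₀ ℂ,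
    0 ≤ (∑ j ∈ x.support, ∑ k ∈ x.support, conj (x j) * ρ j k * x k).re) ∧
  (∑' j : ℤ, ρ j j) = 1

/-- The Hilbert–Schmidt norm of a kernel. -/
def HSnorm (A : ℤ → ℤ → ℂ) : ℝ := Real.sqrt (∑' p : ℤ × ℤ, ‖A p.1 p.2‖ ^ 2)

/-- The `L²([-π,π]×ℤ)` norm of a data function. -/
def L2norm (y : ℝ → ℤ → ℂ) : ℝ :=
  Real.sqrt (∑' l : ℤ, ∫ θ in (-π)..π, ‖y θ l‖ ^ 2)

/- ### Auxiliary lemmas -/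

lemma aux_tpinem_eq_sum (J : ℤ → ℝ → ℝ) (g : ℝ) (ρ : ℤ → ℤ → ℂ) (s : Finset ℤ)
    (h : ∀ j k : ℤ, ρ j k ≠ 0 → j ∈ s ∧ k ∈ s) (θ : ℝ) (l : ℤ) :
    Tpinem J g ρ θ l =
    ∑ j ∈ s, ∑ k ∈ s,
      Complex.exp (Complex.I * ((l : ℂ) - j) * θ) * ((J (l - j) (2 * |g|) : ℝ) : ℂ) *
        ρ j k * Complex.exp (Complex.I * ((k : ℂ) - l) * θ) * ((J (l - k) (2 * |g|) : ℝ) : ℂ) := by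
  unfold Tpinem
  rw [tsum_eq_sum (s := s) ?_]
  · refine Finset.sum_congr rfl fun j _ => ?_
    refine tsum_eq_sum fun k hk => ?_
    have : ρ j k = 0 := by by_contra hne; exact hk (h j k hne).2
    simp [this]
  · intro j hj
    have : ∀ k, ρ j k = 0 := fun k => by by_contra hne; exact hj (h j k hne).1
    simp [this]

lemma aux_norm_exp_I (u v : ℤ) (θ : ℝ) :
    ‖Complex.exp (Complex.I * ((u : ℂ) - (v : ℂ)) * (θ : ℂ))‖ = 1 := by
  rw [Complex.norm_exp]
  have : (Complex.I * ((u : ℂ) - (v : ℂ)) * (θ : ℂ)).re = 0 := by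
    simp [Complex.mul_re, Complex.mul_im]
  rw [this, Real.exp_zero]

lemma aux_pow_div_fact_mono (x : ℝ) (hx : 0 ≤ x) (m n : ℕ) (hxm : x ≤ m + 1) (hmn : m ≤ n) :
    x ^ n / (Nat.factorial n : ℝ) ≤ x ^ m / (Nat.factorial m : ℝ) := by
  induction n with
  | zero =>
    have : m = 0 := Nat.le_zero.mp hmn
    simp [this]
  | succ n ih =>
    rcases Nat.lt_or_ge m (n + 1) with h | h
    · have hm : m ≤ n := Nat.lt_succ_iff.mp h
      calc x ^ (n+1) / (Nat.factorial (n+1) : ℝ)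
          = (x / (n+1)) * (x ^ n / (Nat.factorial n : ℝ)) := by
            rw [Nat.factorial_succ]; push_cast; field_simp; ring
        _ ≤ 1 * (x ^ n / (Nat.factorial n : ℝ)) := by
            have h1 : x / (n+1) ≤ 1 := by
              rw [div_le_one (by positivity)]
              calc x ≤ (m : ℝ) + 1 := hxm
                _ ≤ (n : ℝ) + 1 := by
                    exact_mod_cast Nat.add_le_add_right hm 1
            have h2 : 0 ≤ x ^ n / (Nat.factorial n : ℝ) := by positivity
            exact mul_le_mul_of_nonneg_right h1 h2
        _ ≤ x ^ m / (Nat.factorial m : ℝ) := by rw [one_mul]; exact ih hm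
    · have : m = n + 1 := le_antisymm hmn h
      subst this; exact le_refl _

/-- **The inverse of the PINEM forward operator restricted to density operators is not
uniformly continuous**: there is `ε > 0` such that for every `δ > 0` there are density
operators `ρ, σ` with `‖Tρ - Tσ‖_{L²} < δ` and `‖ρ - σ‖_{HS} > ε`. Here `J` is the Bessel
function of the first kind of integer order, satisfying `|J n (2x)| ≤ |x|^{|n|}/|n|!`
(whence `sup_{s∈[0,4|g|]}|J k s| → 0` as `k → ∞`). -/
theorem Tpinem_inverse_not_uniformly_continuous (J : ℤ → ℝ → ℝ) (g : ℝ)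
    (hJb : ∀ (n : ℤ) (x : ℝ), |J n (2 * x)| ≤ |x| ^ n.natAbs / (Nat.factorial n.natAbs : ℝ))
    (hJsup : Tendsto (fun k : ℕ => ⨆ s ∈ Set.Icc (0 : ℝ) (4 * |g|), |J (k : ℤ) s|)
      atTop (nhds 0)) :
    ∃ ε > 0, ∀ δ > 0, ∃ ρ σ : ℤ → ℤ → ℂ, IsDensity ρ ∧ IsDensity σ ∧
      L2norm (fun θ l => Tpinem J g ρ θ l - Tpinem J g σ θ l) < δ ∧
      HSnorm (fun j k => ρ j k - σ j k) > ε := by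
  classical
  refine ⟨1/2, by norm_num, fun δ hδ => ?_⟩
  set x : ℝ := 2 * |g| with hxdef
  have hx0 : 0 ≤ x := by positivity
  set b : ℤ → ℝ := fun n => |g| ^ n.natAbs / (Nat.factorial n.natAbs : ℝ) with hbdef
  have hab : ∀ n : ℤ, |J n (2 * |g|)| ≤ b n := fun n => by
    simpa [hbdef, abs_abs] using hJb n |g|
  have hb0 : ∀ n, 0 ≤ b n := fun n => by positivity
  have hbexp : ∀ n : ℤ, b n ≤ Real.exp |g| := by
    intro n
    calc b n ≤ ∑ i ∈ Finset.range (n.natAbs + 1), |g| ^ i / (Nat.factorial i : ℝ) :=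
          Finset.single_le_sum (f := fun i => |g| ^ i / (Nat.factorial i : ℝ))
            (fun i _ => by positivity) (Finset.self_mem_range_succ _)
      _ ≤ Real.exp |g| := Real.sum_le_exp_of_nonneg (abs_nonneg g) _
  have hbsum : Summable b := by
    apply Summable.of_nat_of_neg <;>
      · simpa [hbdef] using Real.summable_pow_div_factorial |g|
  set C : ℝ := ∑' n, b n with hCdef
  have hC0 : 0 ≤ C := tsum_nonneg hb0
  set K : ℝ := 2 * π * (Real.exp |g| * C) + 1 with hKdef
  have hK0 : 0 < K := by positivity
  -- choose the order m of the off-diagonal matrix entry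
  have hev := (FloorSemiring.tendsto_pow_div_factorial_atTop (K := ℝ) x).eventually_lt_const
      (show (0:ℝ) < δ ^ 2 / K by positivity)
  obtain ⟨N, hN⟩ := eventually_atTop.mp hev
  set m : ℕ := max N (max 1 ⌈x⌉₊) with hmdef
  have hm1 : 1 ≤ m := le_trans (le_max_left _ _) (le_max_right _ _)
  have hxm : x ≤ (m : ℝ) + 1 := by
    have h1 : x ≤ (⌈x⌉₊ : ℝ) := Nat.le_ceil x
    have h2 : (⌈x⌉₊ : ℝ) ≤ (m : ℝ) := by
      exact_mod_cast le_trans (le_max_right 1 ⌈x⌉₊) (le_max_right N _)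
    linarith
  have hfm : x ^ m / (Nat.factorial m : ℝ) < δ ^ 2 / K := hN m (le_max_left _ _)
  set M : ℤ := (m : ℤ) with hMdef
  have hM0 : M ≠ 0 := by
    rw [hMdef]; exact_mod_cast Nat.one_le_iff_ne_zero.mp hm1
  have h0M : (0 : ℤ) ∉ ({M} : Finset ℤ) := by simp [Ne.symm hM0]
  -- the two density operators
  set ρ : ℤ → ℤ → ℂ := fun j k =>
    if j = 0 ∧ k = 0 then 1/2 else if j = M ∧ k = M then 1/2 else 0 with hρ
  set v : ℤ → ℂ := fun j => if j = 0 ∨ j = M then 1 else 0 with hv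
  set σ : ℤ → ℤ → ℂ := fun j k => (1/2) * v j * v k with hσ
  have hvc : ∀ i, conj (v i) = v i := fun i => by
    rw [hv]; dsimp only; split_ifs <;> simp
  have hhalf : conj (1/2 : ℂ) = 1/2 := by simp [map_div₀, Complex.conj_ofNat]
  have hsupρ : ∀ j k : ℤ, ρ j k ≠ 0 → j ∈ ({0, M} : Finset ℤ) ∧ k ∈ ({0, M} : Finset ℤ) := by
    intro j k h
    rw [hρ] at h; dsimp only at h
    by_cases h1 : j = 0 ∧ k = 0
    · simp [h1.1, h1.2]
    by_cases h2 : j = M ∧ k = M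
    · simp [h2.1, h2.2]
    simp [h1, h2] at h
  have hsupσ : ∀ j k : ℤ, σ j k ≠ 0 → j ∈ ({0, M} : Finset ℤ) ∧ k ∈ ({0, M} : Finset ℤ) := by
    intro j k h
    rw [hσ] at h; dsimp only at h
    constructor
    · by_cases h1 : j = 0 ∨ j = M
      · simpa using h1
      · exfalso; apply h; rw [hv]; simp [h1]
    · by_cases h1 : k = 0 ∨ k = M
      · simpa using h1
      · exfalso; apply h; rw [hv]; simp [h1]
  -- ρ is a density operator
  have hρdens : IsDensity ρ := by
    refine ⟨?_, ?_, ?_⟩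
    · intro j k
      have hsymm : ρ j k = ρ k j := by
        rw [hρ]; dsimp only
        by_cases h1 : j = 0 ∧ k = 0
        · simp [h1.1, h1.2]
        · by_cases h2 : j = M ∧ k = M
          · simp [h2.1, h2.2]
          · have h1' : ¬(k = 0 ∧ j = 0) := fun hc => h1 ⟨hc.2, hc.1⟩
            have h2' : ¬(k = M ∧ j = M) := fun hc => h2 ⟨hc.2, hc.1⟩
            simp [h1, h2, h1', h2']
      have hreal : conj (ρ k j) = ρ k j := by
        rw [hρ]; dsimp only
        split_ifs <;> simp [map_div₀, Complex.conj_ofNat]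
      rw [hreal, hsymm]
    · intro xv
      rw [Complex.re_sum]
      refine Finset.sum_nonneg fun j _ => ?_
      rw [Complex.re_sum]
      refine Finset.sum_nonneg fun k _ => ?_
      by_cases h1 : j = 0 ∧ k = 0
      · obtain ⟨rfl, rfl⟩ := h1
        have : ρ 0 0 = 1/2 := by simp [hρ]
        rw [this]
        have hrw : conj (xv 0) * (1/2 : ℂ) * xv 0 = (1/2 : ℂ) * (xv 0 * conj (xv 0)) := by ring
        rw [hrw, Complex.mul_conj]
        simp only [Complex.mul_re, Complex.ofReal_re, Complex.ofReal_im]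
        have := Complex.normSq_nonneg (xv 0)
        norm_num
        linarith
      · by_cases h2 : j = M ∧ k = M
        · obtain ⟨rfl, rfl⟩ := h2
          have : ρ M M = 1/2 := by simp [hρ, hM0]
          rw [this]
          have hrw : conj (xv M) * (1/2 : ℂ) * xv M = (1/2 : ℂ) * (xv M * conj (xv M)) := by ring
          rw [hrw, Complex.mul_conj]
          simp only [Complex.mul_re, Complex.ofReal_re, Complex.ofReal_im]
          have := Complex.normSq_nonneg (xv M)
          norm_num
          linarith
        · have : ρ j k = 0 := by rw [hρ]; dsimp only; simp [h1, h2]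
          simp [this]
    · rw [tsum_eq_sum (s := ({0, M} : Finset ℤ)) ?_]
      · rw [show ({0, M} : Finset ℤ) = insert 0 {M} from rfl, Finset.sum_insert h0M,
          Finset.sum_singleton]
        have e1 : ρ 0 0 = 1/2 := by simp [hρ]
        have e2 : ρ M M = 1/2 := by simp [hρ, hM0]
        rw [e1, e2]; norm_num
      · intro j hj
        simp only [Finset.mem_insert, Finset.mem_singleton] at hj
        push_neg at hj
        simp [hρ, hj.1, hj.2]
  -- σ is a density operator
  have hσdens : IsDensity σ := by
    refine ⟨?_, ?_, ?_⟩
    · intro j k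
      rw [hσ]; dsimp only
      rw [map_mul, map_mul, hhalf, hvc, hvc]; ring
    · intro xv
      have hrew : ∑ j ∈ xv.support, ∑ k ∈ xv.support, conj (xv j) * σ j k * xv k
          = (1/2 : ℂ) * ((∑ j ∈ xv.support, conj (xv j) * v j) *
              (∑ k ∈ xv.support, v k * xv k)) := by
        rw [Finset.sum_mul_sum, Finset.mul_sum]
        refine Finset.sum_congr rfl fun j _ => ?_
        rw [Finset.mul_sum]
        refine Finset.sum_congr rfl fun k _ => ?_
        rw [hσ]; dsimp only; ring
      have hconj : (∑ k ∈ xv.support, v k * xv k)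
          = conj (∑ j ∈ xv.support, conj (xv j) * v j) := by
        rw [map_sum]
        refine Finset.sum_congr rfl fun k _ => ?_
        rw [map_mul, Complex.conj_conj, hvc, mul_comm]
      rw [hrew, hconj, Complex.mul_conj]
      simp only [Complex.mul_re, Complex.ofReal_re, Complex.ofReal_im]
      have := Complex.normSq_nonneg (∑ j ∈ xv.support, conj (xv j) * v j)
      norm_num
      linarith
    · rw [tsum_eq_sum (s := ({0, M} : Finset ℤ)) ?_]
      · rw [show ({0, M} : Finset ℤ) = insert 0 {M} from rfl, Finset.sum_insert h0M,
          Finset.sum_singleton]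
        have e1 : σ 0 0 = 1/2 := by rw [hσ, hv]; norm_num
        have e2 : σ M M = 1/2 := by rw [hσ, hv]; norm_num
        rw [e1, e2]; norm_num
      · intro j hj
        simp only [Finset.mem_insert, Finset.mem_singleton] at hj
        push_neg at hj
        rw [hσ, hv]; dsimp only
        simp [hj.1, hj.2]
  refine ⟨ρ, σ, hρdens, hσdens, ?_, ?_⟩
  · -- the L² bound
    have key : ∀ (θ : ℝ) (l : ℤ), Tpinem J g ρ θ l - Tpinem J g σ θ l =
        -(Complex.exp (Complex.I * ((l : ℂ) - ((0:ℤ) : ℂ)) * θ) * ((J (l - 0) (2 * |g|) : ℝ) : ℂ)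
            * (1/2) * Complex.exp (Complex.I * ((M : ℂ) - l) * θ) * ((J (l - M) (2 * |g|) : ℝ) : ℂ)
          + Complex.exp (Complex.I * ((l : ℂ) - (M : ℂ)) * θ) * ((J (l - M) (2 * |g|) : ℝ) : ℂ)
            * (1/2) * Complex.exp (Complex.I * (((0:ℤ) : ℂ) - l) * θ)
            * ((J (l - 0) (2 * |g|) : ℝ) : ℂ)) := by
      intro θ l
      rw [aux_tpinem_eq_sum J g ρ _ hsupρ, aux_tpinem_eq_sum J g σ _ hsupσ]
      rw [show ({0, M} : Finset ℤ) = insert 0 {M} from rfl]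
      simp only [Finset.sum_insert h0M, Finset.sum_singleton]
      have r00 : ρ 0 0 = 1/2 := by simp [hρ]
      have r0M : ρ 0 M = 0 := by simp [hρ, hM0, Ne.symm hM0]
      have rM0 : ρ M 0 = 0 := by simp [hρ, hM0, Ne.symm hM0]
      have rMM : ρ M M = 1/2 := by simp [hρ, hM0]
      have s00 : σ 0 0 = 1/2 := by rw [hσ, hv]; norm_num
      have s0M : σ 0 M = 1/2 := by rw [hσ, hv]; norm_num
      have sM0 : σ M 0 = 1/2 := by rw [hσ, hv]; norm_num
      have sMM : σ M M = 1/2 := by rw [hσ, hv]; norm_num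
      rw [r00, r0M, rM0, rMM, s00, s0M, sM0, sMM]
      ring
    have hnorm : ∀ (θ : ℝ) (l : ℤ), ‖Tpinem J g ρ θ l - Tpinem J g σ θ l‖ ≤
        |J l (2 * |g|)| * |J (l - M) (2 * |g|)| := by
      intro θ l
      rw [key θ l, norm_neg]
      refine le_trans (norm_add_le _ _) (le_of_eq ?_)
      rw [norm_mul, norm_mul, norm_mul, norm_mul, norm_mul, norm_mul, norm_mul, norm_mul]
      rw [aux_norm_exp_I l 0 θ, aux_norm_exp_I M l θ, aux_norm_exp_I l M θ, aux_norm_exp_I 0 l θ]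
      simp only [Complex.norm_real, Real.norm_eq_abs, sub_zero, one_mul, mul_one]
      have : ‖(1/2 : ℂ)‖ = 1/2 := by norm_num
      rw [this]; ring
    have hcont : ∀ l : ℤ, Continuous fun θ : ℝ =>
        ‖Tpinem J g ρ θ l - Tpinem J g σ θ l‖ ^ 2 := by
      intro l
      have heq : (fun θ : ℝ => ‖Tpinem J g ρ θ l - Tpinem J g σ θ l‖ ^ 2)
          = fun θ : ℝ => ‖-(Complex.exp (Complex.I * ((l : ℂ) - ((0:ℤ) : ℂ)) * θ) *
              ((J (l - 0) (2 * |g|) : ℝ) : ℂ) * (1/2) *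
              Complex.exp (Complex.I * ((M : ℂ) - l) * θ) * ((J (l - M) (2 * |g|) : ℝ) : ℂ)
            + Complex.exp (Complex.I * ((l : ℂ) - (M : ℂ)) * θ) *
              ((J (l - M) (2 * |g|) : ℝ) : ℂ) * (1/2) *
              Complex.exp (Complex.I * (((0:ℤ) : ℂ) - l) * θ) *
              ((J (l - 0) (2 * |g|) : ℝ) : ℂ))‖ ^ 2 := funext fun θ => by rw [key θ l]
      rw [heq]
      fun_prop
    have hpi : (-π) ≤ π := by linarith [pi_pos]
    set c : ℤ → ℝ := fun l => (|J l (2 * |g|)| * |J (l - M) (2 * |g|)|) ^ 2 with hcdef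
    have hc0 : ∀ l, 0 ≤ c l := fun l => by positivity
    have hIb : ∀ l : ℤ, (∫ θ in (-π)..π, ‖Tpinem J g ρ θ l - Tpinem J g σ θ l‖ ^ 2)
        ≤ 2 * π * c l := by
      intro l
      calc (∫ θ in (-π)..π, ‖Tpinem J g ρ θ l - Tpinem J g σ θ l‖ ^ 2)
          ≤ ∫ _ in (-π)..π, c l := by
            refine intervalIntegral.integral_mono_on hpi
              ((hcont l).intervalIntegrable _ _) (intervalIntegrable_const) fun θ _ => ?_
            have h1 := hnorm θ l
            have h2 : (0:ℝ) ≤ ‖Tpinem J g ρ θ l - Tpinem J g σ θ l‖ := norm_nonneg _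
            rw [hcdef]; dsimp only
            nlinarith
        _ = (π - (-π)) * c l := by rw [intervalIntegral.integral_const, smul_eq_mul]
        _ = 2 * π * c l := by ring
    have hInn : ∀ l : ℤ, 0 ≤ ∫ θ in (-π)..π, ‖Tpinem J g ρ θ l - Tpinem J g σ θ l‖ ^ 2 :=
      fun l => intervalIntegral.integral_nonneg hpi (fun θ _ => by positivity)
    -- the pointwise summable bound
    have hbb : ∀ l : ℤ, b l * b (l - M) ≤ x ^ m / (Nat.factorial m : ℝ) := by
      intro l
      set p := l.natAbs with hp
      set q := (l - M).natAbs with hq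
      have hmpq : m ≤ p + q := by
        have h2 : M.natAbs ≤ p + q := by
          calc M.natAbs = (l - (l - M)).natAbs := by norm_num
            _ ≤ l.natAbs + (l - M).natAbs := Int.natAbs_sub_le _ _
        simpa [hMdef, Int.natAbs_natCast] using h2
      have hfact : ((Nat.factorial (p + q) : ℕ) : ℝ) ≤
          2 ^ (p + q) * ((Nat.factorial p : ℝ) * (Nat.factorial q : ℝ)) := by
        have hch : (p + q).choose q ≤ 2 ^ (p + q) := by
          calc (p + q).choose q ≤ ∑ i ∈ Finset.range (p + q + 1), (p + q).choose i :=
                Finset.single_le_sum (fun i _ => Nat.zero_le _)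
                  (Finset.mem_range.mpr (Nat.lt_succ_of_le (Nat.le_add_left _ _)))
            _ = 2 ^ (p + q) := Nat.sum_range_choose _
        have heq := Nat.add_choose_mul_factorial_mul_factorial p q
        have hnat : Nat.factorial (p + q) ≤ 2 ^ (p + q) * (Nat.factorial p * Nat.factorial q) := by
          calc Nat.factorial (p + q) = (p + q).choose q * Nat.factorial p * Nat.factorial q :=
                heq.symm
            _ ≤ 2 ^ (p + q) * Nat.factorial p * Nat.factorial q :=
                Nat.mul_le_mul_right _ (Nat.mul_le_mul_right _ hch)
            _ = 2 ^ (p + q) * (Nat.factorial p * Nat.factorial q) := by ring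
        calc ((Nat.factorial (p + q) : ℕ) : ℝ)
            ≤ ((2 ^ (p + q) * (Nat.factorial p * Nat.factorial q) : ℕ) : ℝ) := by
              exact_mod_cast hnat
          _ = 2 ^ (p + q) * ((Nat.factorial p : ℝ) * (Nat.factorial q : ℝ)) := by push_cast; ring
      have step1 : b l * b (l - M) ≤ x ^ (p + q) / (Nat.factorial (p + q) : ℝ) := by
        have hbl : b l * b (l - M) =
            |g| ^ (p + q) / ((Nat.factorial p : ℝ) * (Nat.factorial q : ℝ)) := by
          rw [hbdef]; dsimp only
          rw [← hp, ← hq, pow_add, div_mul_div_comm]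
        rw [hbl, div_le_div_iff₀ (by positivity) (by positivity)]
        have hgnn : (0:ℝ) ≤ |g| ^ (p + q) := by positivity
        calc |g| ^ (p + q) * ((Nat.factorial (p + q) : ℕ) : ℝ)
            ≤ |g| ^ (p + q) * (2 ^ (p + q) * ((Nat.factorial p : ℝ) * (Nat.factorial q : ℝ))) :=
              mul_le_mul_of_nonneg_left hfact hgnn
          _ = x ^ (p + q) * ((Nat.factorial p : ℝ) * (Nat.factorial q : ℝ)) := by
              rw [hxdef, mul_pow]; ring
      exact le_trans step1 (aux_pow_div_fact_mono x hx0 m (p + q) hxm hmpq)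
    have hcb : ∀ l : ℤ, c l ≤ (x ^ m / (Nat.factorial m : ℝ)) * (Real.exp |g| * b l) := by
      intro l
      have h1 : |J l (2 * |g|)| * |J (l - M) (2 * |g|)| ≤ b l * b (l - M) :=
        mul_le_mul (hab l) (hab (l - M)) (abs_nonneg _) (hb0 l)
      have h0 : (0:ℝ) ≤ |J l (2 * |g|)| * |J (l - M) (2 * |g|)| := by positivity
      have h2 : b l * b (l - M) ≤ Real.exp |g| * b l := by
        rw [mul_comm]
        exact mul_le_mul_of_nonneg_right (hbexp _) (hb0 l)
      calc c l = (|J l (2 * |g|)| * |J (l - M) (2 * |g|)|) *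
            (|J l (2 * |g|)| * |J (l - M) (2 * |g|)|) := by rw [hcdef]; dsimp only; ring
        _ ≤ (x ^ m / (Nat.factorial m : ℝ)) * (Real.exp |g| * b l) :=
            mul_le_mul (le_trans h1 (hbb l)) (le_trans h1 h2) h0 (by positivity)
    have hbdsum : Summable fun l : ℤ => (x ^ m / (Nat.factorial m : ℝ)) * (Real.exp |g| * b l) :=
      (hbsum.mul_left _).mul_left _
    have hcsum : Summable c := Summable.of_nonneg_of_le hc0 hcb hbdsum
    have hc2sum : Summable fun l : ℤ => 2 * π * c l := hcsum.mul_left _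
    have hIsum : Summable fun l : ℤ =>
        ∫ θ in (-π)..π, ‖Tpinem J g ρ θ l - Tpinem J g σ θ l‖ ^ 2 :=
      Summable.of_nonneg_of_le hInn hIb hc2sum
    have hSle : (∑' l : ℤ, ∫ θ in (-π)..π, ‖Tpinem J g ρ θ l - Tpinem J g σ θ l‖ ^ 2)
        ≤ 2 * π * ((x ^ m / (Nat.factorial m : ℝ)) * (Real.exp |g| * C)) := by
      calc (∑' l : ℤ, ∫ θ in (-π)..π, ‖Tpinem J g ρ θ l - Tpinem J g σ θ l‖ ^ 2)
          ≤ ∑' l : ℤ, 2 * π * c l := Summable.tsum_le_tsum hIb hIsum hc2sum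
        _ = 2 * π * ∑' l : ℤ, c l := tsum_mul_left
        _ ≤ 2 * π * ((x ^ m / (Nat.factorial m : ℝ)) * (Real.exp |g| * C)) := by
            have h1 : (∑' l : ℤ, c l) ≤
                ∑' l : ℤ, (x ^ m / (Nat.factorial m : ℝ)) * (Real.exp |g| * b l) :=
              Summable.tsum_le_tsum hcb hcsum hbdsum
            have h2 : (∑' l : ℤ, (x ^ m / (Nat.factorial m : ℝ)) * (Real.exp |g| * b l))
                = (x ^ m / (Nat.factorial m : ℝ)) * (Real.exp |g| * C) := by
              rw [tsum_mul_left, tsum_mul_left]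
            have hpi2 : (0:ℝ) ≤ 2 * π := by positivity
            exact mul_le_mul_of_nonneg_left (h2 ▸ h1) hpi2
    have hstrict : 2 * π * ((x ^ m / (Nat.factorial m : ℝ)) * (Real.exp |g| * C)) < δ ^ 2 := by
      have hf0 : 0 ≤ x ^ m / (Nat.factorial m : ℝ) := by positivity
      have h1 : 2 * π * ((x ^ m / (Nat.factorial m : ℝ)) * (Real.exp |g| * C))
          ≤ (x ^ m / (Nat.factorial m : ℝ)) * K := by
        have h2 : 2 * π * (Real.exp |g| * C) ≤ K := by rw [hKdef]; linarith
        calc 2 * π * ((x ^ m / (Nat.factorial m : ℝ)) * (Real.exp |g| * C))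
            = (x ^ m / (Nat.factorial m : ℝ)) * (2 * π * (Real.exp |g| * C)) := by ring
          _ ≤ (x ^ m / (Nat.factorial m : ℝ)) * K := mul_le_mul_of_nonneg_left h2 hf0
      have h3 : (x ^ m / (Nat.factorial m : ℝ)) * K < (δ ^ 2 / K) * K :=
        mul_lt_mul_of_pos_right hfm hK0
      have h4 : (δ ^ 2 / K) * K = δ ^ 2 := div_mul_cancel₀ _ (ne_of_gt hK0)
      linarith
    have hnn : 0 ≤ ∑' l : ℤ, ∫ θ in (-π)..π, ‖Tpinem J g ρ θ l - Tpinem J g σ θ l‖ ^ 2 :=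
      tsum_nonneg hInn
    unfold L2norm
    calc Real.sqrt (∑' l : ℤ, ∫ θ in (-π)..π, ‖Tpinem J g ρ θ l - Tpinem J g σ θ l‖ ^ 2)
        < Real.sqrt (δ ^ 2) := Real.sqrt_lt_sqrt hnn (lt_of_le_of_lt hSle hstrict)
      _ = δ := Real.sqrt_sq hδ.le
  · -- the Hilbert–Schmidt norm lower bound
    have hset : ∀ p : ℤ × ℤ, p ∉ ({((0:ℤ), M), (M, (0:ℤ))} : Finset (ℤ × ℤ)) →
        ‖ρ p.1 p.2 - σ p.1 p.2‖ ^ 2 = 0 := by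
      rintro ⟨j, k⟩ hp
      simp only [Finset.mem_insert, Finset.mem_singleton] at hp
      push_neg at hp
      have heq : ρ j k = σ j k := by
        rcases eq_or_ne j 0 with hj0 | hj0
        · rcases eq_or_ne k 0 with hk0 | hk0
          · subst hj0; subst hk0
            rw [hρ, hσ, hv]; norm_num
          · rcases eq_or_ne k M with hkM | hkM
            · exact absurd (by rw [hj0, hkM]) hp.1
            · subst hj0
              rw [hρ, hσ, hv]; simp [hk0, hkM, Ne.symm hM0]
        · rcases eq_or_ne j M with hjM | hjM
          · rcases eq_or_ne k 0 with hk0 | hk0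
            · exact absurd (by rw [hjM, hk0]) hp.2
            · rcases eq_or_ne k M with hkM | hkM
              · subst hjM; subst hkM
                rw [hρ, hσ, hv]; simp [hM0]
              · subst hjM
                rw [hρ, hσ, hv]; simp [hM0, hk0, hkM]
          · rw [hρ, hσ, hv]; simp [hj0, hjM]
      simp [heq]
    have hne : ((0:ℤ), M) ∉ ({(M, (0:ℤ))} : Finset (ℤ × ℤ)) := by
      simp [Prod.ext_iff, Ne.symm hM0]
    have e1 : ρ 0 M - σ 0 M = -(1/2 : ℂ) := by
      rw [hρ, hσ, hv]; simp [hM0, Ne.symm hM0]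
    have e2 : ρ M 0 - σ M 0 = -(1/2 : ℂ) := by
      rw [hρ, hσ, hv]; simp [hM0, Ne.symm hM0]
    have htsum : (∑' p : ℤ × ℤ, ‖ρ p.1 p.2 - σ p.1 p.2‖ ^ 2) = 1/2 := by
      rw [tsum_eq_sum hset,
        show ({((0:ℤ), M), (M, (0:ℤ))} : Finset (ℤ × ℤ)) = insert ((0:ℤ), M) {(M, (0:ℤ))} from rfl,
        Finset.sum_insert hne, Finset.sum_singleton]
      dsimp only
      rw [e1, e2, norm_neg]
      have : ‖(1/2 : ℂ)‖ = 1/2 := by norm_num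
      rw [this]; norm_num
    unfold HSnorm
    rw [htsum]
    have h12 : (1/2 : ℝ) < Real.sqrt (1/2) := by
      rw [Real.lt_sqrt (by norm_num)]; norm_num
    exact h12
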